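/- Let L : List Bool be a Boolean string of length m, let n < m, and let e(n,m) = List.replicate n false ++ [true] ++ List.replicate (m − 1 − n) false be the length-m string with a single one at position n. If the character of L at position n is false, then the Levenshtein edit distance with unit costs between L and e(n,m) is at least L.count true. (Together with the previous fact this shows that comparing the two distances determines the bit of L at position n.) -/

import Mathlib

/-!
Deleting, inserting or substituting one letter changes the number of occurrences of any fixed
letter by at most one, so `levenshtein defaultCost xs ys` bounds `|xs.count a - ys.count a|`.
For `a = true` this alone only gives `L.count true ≤ d + 1`. The missing unit is won by induction
on `n` through the recurrence of the edit distance: in every branch of the minimum either the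
induction hypothesis applies, or one of the two counting bounds (for `true`, or for `false`
together with `L.length ≤ n + 1 + j`) has a unit of slack.
-/

structure Levenshtein.Cost (α β δ : Type*) where
  delete : α → δ
  insert : β → δ
  substitute : α → β → δ

def Levenshtein.defaultCost {α : Type*} [DecidableEq α] : Levenshtein.Cost α α ℕ where
  delete _ := 1
  insert _ := 1
  substitute a b := if a = b then 0 else 1

def Levenshtein.impl {α β δ : Type*} [AddZeroClass δ] [Min δ]
    (C : Levenshtein.Cost α β δ)
    (xs : List α) (y : β) (d : {r : List δ // 0 < r.length}) :
    {r : List δ // 0 < r.length} :=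
  let ⟨ds, w⟩ := d
  xs.zip (ds.zip ds.tail) |>.foldr
    (init := ⟨[ds.getLast (List.length_pos_iff_ne_nil.mp w) + C.insert y], by simp⟩)
    (fun ⟨x, d₀, d₁⟩ ⟨r, w⟩ =>
      ⟨min (C.delete x + r[0]) (min (C.insert y + d₀) (C.substitute x y + d₁)) :: r, by simp⟩)

def suffixLevenshtein {α β δ : Type*} [AddZeroClass δ] [Min δ]
    (C : Levenshtein.Cost α β δ) (xs : List α) (ys : List β) :
    {r : List δ // 0 < r.length} :=
  ys.foldr
    (Levenshtein.impl C xs)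
    (xs.foldr (init := ⟨[0], by simp⟩) (fun a ⟨r, w⟩ => ⟨(C.delete a + r[0]) :: r, by simp⟩))

def levenshtein {α β δ : Type*} [AddZeroClass δ] [Min δ]
    (C : Levenshtein.Cost α β δ) (xs : List α) (ys : List β) : δ :=
  let ⟨r, w⟩ := suffixLevenshtein C xs ys
  r[0]

open Levenshtein

section Recurrence

variable {α β δ : Type*} [AddZeroClass δ] [Min δ] (C : Cost α β δ)

theorem Levenshtein.impl_cons (x : α) (xs : List α) (y : β) (a d : δ) (ds : List δ) (h) :
    impl C (x :: xs) y ⟨a :: d :: ds, h⟩ =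
      let r := impl C xs y ⟨d :: ds, by simp⟩
      ⟨min (C.delete x + r.1[0]'r.2) (min (C.insert y + a) (C.substitute x y + d)) :: r.1,
        by simp⟩ :=
  rfl

theorem Levenshtein.length_impl (y : β) : ∀ (xs : List α) (d : {r : List δ // 0 < r.length}),
    d.1.length = xs.length + 1 → (impl C xs y d).1.length = xs.length + 1
  | [], _, _ => rfl
  | _ :: _, ⟨[], _⟩, h | _ :: _, ⟨[_], _⟩, h => by simp at h
  | x :: xs, ⟨a :: d :: ds, _⟩, h => by
    simpa [impl_cons] using length_impl y xs ⟨d :: ds, by simp⟩ (by simpa using h)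

theorem suffixLevenshtein_length (xs : List α) (ys : List β) :
    (suffixLevenshtein C xs ys).1.length = xs.length + 1 := by
  induction ys with
  | nil => induction xs with
    | nil => rfl
    | cons x xs ih => simpa [suffixLevenshtein] using ih
  | cons y ys ih => exact length_impl C y xs _ ih

theorem suffixLevenshtein_cons_right (xs : List α) (y : β) (ys : List β) :
    suffixLevenshtein C xs (y :: ys) = impl C xs y (suffixLevenshtein C xs ys) :=
  rfl

theorem levenshtein_eq_head (xs : List α) (ys : List β) :
    levenshtein C xs ys = (suffixLevenshtein C xs ys).1[0]'(suffixLevenshtein C xs ys).2 :=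
  rfl

theorem suffixLevenshtein_cons_left (x : α) (xs : List α) (ys : List β) :
    (suffixLevenshtein C (x :: xs) ys).1 =
      levenshtein C (x :: xs) ys :: (suffixLevenshtein C xs ys).1 := by
  induction ys with
  | nil => rfl
  | cons y ys ih =>
    obtain ⟨⟨_ | ⟨d, ds⟩, hS⟩, hS'⟩ : ∃ S, suffixLevenshtein C xs ys = S := ⟨_, rfl⟩
    · simp at hS
    have hcons : suffixLevenshtein C (x :: xs) ys = ⟨_ :: d :: ds, by simp⟩ :=
      Subtype.ext (by rw [ih, hS'])
    rw [levenshtein_eq_head, suffixLevenshtein_cons_right, suffixLevenshtein_cons_right, hcons,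
      hS', impl_cons]
    rfl

theorem levenshtein_cons_nil (x : α) (xs : List α) :
    levenshtein C (x :: xs) ([] : List β) = C.delete x + levenshtein C xs [] :=
  rfl

theorem levenshtein_nil_cons (y : β) (ys : List β) :
    levenshtein C ([] : List α) (y :: ys) = levenshtein C [] ys + C.insert y := by
  obtain ⟨⟨_ | ⟨a, _ | _⟩, hS⟩, hS'⟩ : ∃ S, suffixLevenshtein C ([] : List α) ys = S :=
    ⟨_, rfl⟩
  all_goals have := suffixLevenshtein_length C [] ys; simp_all
  rw [levenshtein_eq_head, levenshtein_eq_head]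
  simp only [suffixLevenshtein_cons_right, hS']
  rfl

theorem levenshtein_cons_cons (x : α) (xs : List α) (y : β) (ys : List β) :
    levenshtein C (x :: xs) (y :: ys) =
      min (C.delete x + levenshtein C xs (y :: ys))
        (min (C.insert y + levenshtein C (x :: xs) ys)
          (C.substitute x y + levenshtein C xs ys)) := by
  obtain ⟨⟨_ | ⟨d, ds⟩, hS⟩, hS'⟩ : ∃ S, suffixLevenshtein C xs ys = S := ⟨_, rfl⟩
  · simp at hS
  have hcons : suffixLevenshtein C (x :: xs) ys = ⟨_ :: d :: ds, by simp⟩ :=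
    Subtype.ext (by rw [suffixLevenshtein_cons_left, hS'])
  rw [levenshtein_eq_head C xs (y :: ys), levenshtein_eq_head C xs ys,
    levenshtein_eq_head C (x :: xs) (y :: ys), suffixLevenshtein_cons_right,
    suffixLevenshtein_cons_right, hcons]
  simp only [hS', impl_cons]
  rfl

end Recurrence

section DefaultCost

variable {α : Type*} [DecidableEq α]

@[simp] theorem Levenshtein.defaultCost_delete (a : α) :
    (defaultCost : Cost α α ℕ).delete a = 1 := rfl

@[simp] theorem Levenshtein.defaultCost_insert (a : α) :
    (defaultCost : Cost α α ℕ).insert a = 1 := rfl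

@[simp] theorem Levenshtein.defaultCost_substitute (a b : α) :
    (defaultCost : Cost α α ℕ).substitute a b = if a = b then 0 else 1 := rfl

theorem levenshtein_defaultCost_comm (xs ys : List α) :
    levenshtein defaultCost xs ys = levenshtein defaultCost ys xs := by
  induction xs generalizing ys with
  | nil => induction ys with
    | nil => rfl
    | cons y ys ih => rw [levenshtein_nil_cons, levenshtein_cons_nil, ih, add_comm]; rfl
  | cons x xs ih => induction ys with
    | nil => rw [levenshtein_nil_cons, levenshtein_cons_nil, ih, add_comm]; rfl
    | cons y ys ihy =>
      simp only [levenshtein_cons_cons, ih, ihy, defaultCost_delete, defaultCost_insert,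
        defaultCost_substitute, eq_comm (a := x)]
      rw [min_left_comm]

theorem count_le_levenshtein_defaultCost_add (a : α) (xs ys : List α) :
    xs.count a ≤ levenshtein defaultCost xs ys + ys.count a := by
  induction xs generalizing ys with
  | nil => simp
  | cons x xs ih =>
    have hx : (x :: xs).count a ≤ xs.count a + 1 := by
      rw [List.count_cons]; split <;> omega
    induction ys with
    | nil =>
      have := ih []
      rw [levenshtein_cons_nil, defaultCost_delete]
      simp only [List.count_nil] at *
      omega
    | cons y ys ihy =>
      have hy : ys.count a ≤ (y :: ys).count a := List.count_le_count_cons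
      have h_del := ih (y :: ys)
      have h_sub := ih ys
      rw [levenshtein_cons_cons, ← min_add_add_right, ← min_add_add_right]
      refine le_min (by rw [defaultCost_delete]; omega)
        (le_min (by rw [defaultCost_insert]; omega) ?_)
      by_cases hxy : x = y
      · subst hxy
        simp only [defaultCost_substitute, if_pos, List.count_cons]
        omega
      · simp only [defaultCost_substitute, hxy, if_false]
        omega

theorem count_le_levenshtein_defaultCost_add' (a : α) (xs ys : List α) :
    ys.count a ≤ levenshtein defaultCost xs ys + xs.count a :=
  levenshtein_defaultCost_comm xs ys ▸ count_le_levenshtein_defaultCost_add a ys xs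

end DefaultCost

open List in
theorem count_true_le_levenshtein_replicate_false_append_true_cons {L : List Bool} {n j : ℕ}
    (hlen : L.length ≤ n + 1 + j) (hn : L[n]? = some false) :
    L.count true ≤
      levenshtein defaultCost L (replicate n false ++ true :: replicate j false) := by
  induction n generalizing L with
  | zero =>
    obtain ⟨s, rfl⟩ : ∃ s, L = false :: s := by cases L <;> simp_all
    have h_del := count_le_levenshtein_defaultCost_add true s (true :: replicate j false)
    have h_ins := count_le_levenshtein_defaultCost_add true (false :: s) (replicate j false)
    have h_sub := count_le_levenshtein_defaultCost_add true s (replicate j false)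
    rw [replicate_zero, nil_append, levenshtein_cons_cons]
    simp [count_replicate] at h_del h_ins h_sub ⊢
    omega
  | succ k ih =>
    obtain ⟨a, s, rfl⟩ : ∃ a s, L = a :: s := by cases L <;> simp_all
    -- deleting `a` costs one, and the `false`-count bound shows `s` still needs `s.count true`
    have h_del := count_le_levenshtein_defaultCost_add' false s
      (false :: (replicate k false ++ true :: replicate j false))
    have hs := s.count_true_add_count_false
    have h_ins := count_le_levenshtein_defaultCost_add true (a :: s)
      (replicate k false ++ true :: replicate j false)
    have h_sub := ih (L := s) (by simp at hlen; omega) (by simpa using hn)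
    rw [replicate_succ, cons_append, levenshtein_cons_cons]
    cases a <;> simp [count_replicate] at h_del h_ins hlen ⊢ <;> omega

/-- If `L` has length `m`, `n < m` and the character of `L` at position `n` is
`false`, then the Levenshtein distance (unit costs) between `L` and the length-`m`
string with a single one at position `n` is at least `L.count true`. -/
theorem levenshtein_single_one_of_false (m n : ℕ) (L : List Bool)
    (hL : L.length = m) (hn : n < m)
    (h : L.get ⟨n, by omega⟩ = false) :
    L.count true ≤
      levenshtein Levenshtein.defaultCost L
        (List.replicate n false ++ [true] ++ List.replicate (m - 1 - n) false) := by
  rw [List.append_assoc, List.singleton_append]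
  refine count_true_le_levenshtein_replicate_false_append_true_cons (by omega) ?_
  simpa [List.getElem?_eq_getElem (show n < L.length by omega)] using h
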